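/- arXiv:1901.09739 — 2 statements merged into one kernel-verified Lean document; each statement's English description precedes it below -/
import Mathlib

section
/- Let d ≥ e² be a real number, Z a standard real Gaussian, and X := max{|Z|, |Z|^{-1}}. Then log log d ≤ E[ log log(dX) ] ≤ log 2 + log log(d/e) + sqrt(8/π). -/
/-!
Write `X = max |Z| |Z|⁻¹`, so that `log (d * X) = log d + |log |Z||`; the lower bound is then
monotonicity of `log`. For the upper bound split `log d + |log |Z||` as
`(log d - 1) + (1 + |log |Z||)`, a sum of two numbers `≥ 1`, and use `a + b ≤ 2ab`. What remains
is `log (1 + |log |Z||) ≤ 3/5 + (|Z| ^ (1/2) + |Z| ^ (-1/2)) / 4`, whose expectation is read off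
the absolute moments `E |Z| ^ s = 2 ^ (s/2) Γ((s+1)/2) / √π`; convexity of `Γ` on `[1, 2]` gives
`Γ(1/4) ≤ 4` and `Γ(3/4) ≤ 4/3`, which keeps it below `√(8/π)`.
-/

open MeasureTheory ProbabilityTheory Real Set

lemma Real.log_add_le_log_two_add_log_add_log {a b : ℝ} (ha : 1 ≤ a) (hb : 1 ≤ b) :
    log (a + b) ≤ log 2 + log a + log b := by
  rw [← log_mul two_ne_zero (by positivity), ← log_mul (by positivity) (by positivity)]
  exact log_le_log (by positivity) (by nlinarith)

-- `log y ≤ y / e`, against the quadratic Taylor bound for `exp (u / 2)`.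
lemma Real.log_one_add_le_exp_half {u : ℝ} (hu : 0 ≤ u) :
    log (1 + u) ≤ 3 / 5 + exp (u / 2) / 4 := by
  have hlog : log (1 + u) ≤ (1 + u) / exp 1 := by
    have := log_le_sub_one_of_pos (x := (1 + u) / exp 1) (by positivity)
    rw [log_div (by linarith) (exp_pos 1).ne', log_exp] at this
    linarith
  have hexp := quadratic_le_exp_of_nonneg (x := u / 2) (by linarith)
  have he : 2.7182818283 < exp 1 := exp_one_gt_d9
  have hL : 0 ≤ log (1 + u) := log_nonneg (by linarith)
  rw [le_div_iff₀ (exp_pos 1)] at hlog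
  nlinarith [mul_le_mul_of_nonneg_left he.le hL, sq_nonneg (u - 39 / 10)]

lemma Real.log_max_self_inv {t : ℝ} (ht : 0 < t) : log (max t t⁻¹) = |log t| := by
  have h : max t t⁻¹ = exp |log t| := by
    rw [abs_eq_max_neg, exp_monotone.map_max, exp_neg, exp_log ht]
  rw [h, log_exp]

lemma Real.exp_abs_log_div_two_le {t : ℝ} (ht : 0 < t) :
    exp (|log t| / 2) ≤ t ^ (1 / 2 : ℝ) + t ^ (-1 / 2 : ℝ) := by
  rw [rpow_def_of_pos ht, rpow_def_of_pos ht]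
  rcases abs_cases (log t) with ⟨h, -⟩ | ⟨h, -⟩ <;> rw [h]
  · exact le_add_of_le_of_nonneg (le_of_eq (by ring_nf)) (exp_pos _).le
  · exact le_add_of_nonneg_of_le (exp_pos _).le (le_of_eq (by ring_nf))

lemma Real.log_one_add_abs_log_le {t : ℝ} (ht : 0 < t) :
    log (1 + |log t|) ≤ 3 / 5 + (t ^ (1 / 2 : ℝ) + t ^ (-1 / 2 : ℝ)) / 4 := by
  grw [log_one_add_le_exp_half (abs_nonneg _), exp_abs_log_div_two_le ht]

lemma log_mul_max_abs_inv {d z : ℝ} (hd : 0 < d) (hz : z ≠ 0) :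
    log (d * max |z| |z|⁻¹) = log d + |log (|z|)| := by
  have hz' : 0 < |z| := abs_pos.2 hz
  rw [log_mul hd.ne' (lt_max_of_lt_left hz').ne', log_max_self_inv hz']

lemma log_log_le_log_log_mul_max_abs_inv {d z : ℝ} (hd : 1 < d) (hz : z ≠ 0) :
    log (log d) ≤ log (log (d * max |z| |z|⁻¹)) := by
  rw [log_mul_max_abs_inv (by linarith) hz]
  exact log_le_log (log_pos hd) (le_add_of_nonneg_right (abs_nonneg _))

lemma log_log_mul_max_abs_inv_le {d z : ℝ} (hd : exp 2 ≤ d) (hz : z ≠ 0) :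
    log (log (d * max |z| |z|⁻¹)) ≤
      log 2 + log (log (d / exp 1)) + (3 / 5 + (|z| ^ (1 / 2 : ℝ) + |z| ^ (-1 / 2 : ℝ)) / 4) := by
  have hd0 : 0 < d := (exp_pos 2).trans_le hd
  have hlog : 2 ≤ log d := by simpa using log_le_log (exp_pos 2) hd
  rw [log_mul_max_abs_inv hd0 hz, log_div hd0.ne' (exp_pos 1).ne', log_exp]
  calc log (log d + |log (|z|)|) = log ((log d - 1) + (1 + |log (|z|)|)) := by ring_nf
    _ ≤ log 2 + log (log d - 1) + log (1 + |log (|z|)|) :=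
      log_add_le_log_two_add_log_add_log (by linarith) (le_add_of_nonneg_right (abs_nonneg _))
    _ ≤ _ := by grw [log_one_add_abs_log_le (abs_pos.2 hz)]

lemma Real.Gamma_le_one_of_mem_Icc {s : ℝ} (hs : s ∈ Icc 1 2) : Gamma s ≤ 1 := by
  have h := convexOn_Gamma.le_on_segment (x := 1) (y := 2) (by norm_num) (by norm_num)
    (segment_eq_Icc (by norm_num : (1 : ℝ) ≤ 2) ▸ hs)
  simpa [Gamma_two] using h

lemma Real.Gamma_le_inv_of_mem_Ioc {s : ℝ} (hs : s ∈ Ioc 0 1) : Gamma s ≤ s⁻¹ := by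
  have h1 : Gamma (s + 1) ≤ 1 := Gamma_le_one_of_mem_Icc ⟨by linarith [hs.1], by linarith [hs.2]⟩
  calc Gamma s = s⁻¹ * Gamma (s + 1) := by
        rw [Gamma_add_one hs.1.ne', inv_mul_cancel_left₀ hs.1.ne']
    _ ≤ s⁻¹ := mul_le_of_le_one_right (inv_nonneg.2 hs.1.le) h1

theorem MeasureTheory.IntegrableOn.integrable_comp_abs {E : Type*} [NormedAddCommGroup E]
    {f : ℝ → E} (hf : IntegrableOn f (Ioi 0)) : Integrable (fun x ↦ f |x|) := by
  have hIoi : IntegrableOn (fun x ↦ f |x|) (Ioi 0) :=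
    hf.congr_fun (fun x hx ↦ by rw [abs_of_pos hx]) measurableSet_Ioi
  have hIic : IntegrableOn (fun x ↦ f |x|) (Iic 0) := by
    rw [← Measure.map_neg_eq_self (volume : Measure ℝ)]
    let m : MeasurableEmbedding fun x : ℝ ↦ -x := (Homeomorph.neg ℝ).measurableEmbedding
    rw [m.integrableOn_map_iff]
    simp_rw [Function.comp_def, abs_neg, neg_preimage, neg_Iic, neg_zero]
    exact Iff.mpr integrableOn_Ici_iff_integrableOn_Ioi hIoi
  rw [← integrableOn_univ, ← Iic_union_Ioi (a := 0), integrableOn_union]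
  exact ⟨hIic, hIoi⟩

lemma integral_abs_rpow_mul_exp_neg_half_sq {s : ℝ} (hs : -1 < s) :
    ∫ x : ℝ, |x| ^ s * exp (-(1 / 2) * x ^ 2) = 2 ^ ((s + 1) / 2) * Gamma ((s + 1) / 2) := by
  have h := integral_comp_abs (f := fun t : ℝ ↦ t ^ s * exp (-(1 / 2) * t ^ 2))
  simp only [sq_abs] at h
  have h2 := integral_rpow_mul_exp_neg_mul_rpow two_pos hs (by norm_num : (0 : ℝ) < 1 / 2)
  simp only [rpow_two] at h2
  rw [h, h2, one_div, inv_rpow zero_le_two, ← rpow_neg zero_le_two, neg_div, neg_neg]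
  ring

lemma gaussianPDFReal_zero_one_smul (x y : ℝ) :
    gaussianPDFReal 0 1 x • y = (√(2 * π))⁻¹ * (y * exp (-(1 / 2) * x ^ 2)) := by
  simp only [gaussianPDFReal, NNReal.coe_one, mul_one, sub_zero, smul_eq_mul]
  ring_nf

lemma integrable_gaussianReal_iff {μ : ℝ} {v : NNReal} (hv : v ≠ 0) {f : ℝ → ℝ} :
    Integrable f (gaussianReal μ v) ↔ Integrable (fun x ↦ gaussianPDFReal μ v x • f x) := by
  rw [gaussianReal_of_var_ne_zero _ hv, integrable_withDensity_iff_integrable_smul'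
    (measurable_gaussianPDF _ _) (ae_of_all _ fun _ ↦ gaussianPDF_lt_top)]
  simp [gaussianPDF, gaussianPDFReal_nonneg]

lemma integrable_abs_rpow_gaussianReal {s : ℝ} (hs : -1 < s) :
    Integrable (fun z ↦ |z| ^ s) (gaussianReal 0 1) := by
  rw [integrable_gaussianReal_iff one_ne_zero]
  simp_rw [gaussianPDFReal_zero_one_smul]
  refine Integrable.const_mul ?_ _
  simpa [sq_abs] using
    (integrableOn_rpow_mul_exp_neg_mul_sq (b := 1 / 2) (by norm_num) hs).integrable_comp_abs

lemma integral_abs_rpow_gaussianReal {s : ℝ} (hs : -1 < s) :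
    ∫ z, |z| ^ s ∂gaussianReal 0 1 = 2 ^ (s / 2) * Gamma ((s + 1) / 2) / √π := by
  rw [integral_gaussianReal_eq_integral_smul one_ne_zero]
  simp_rw [gaussianPDFReal_zero_one_smul]
  rw [integral_const_mul, integral_abs_rpow_mul_exp_neg_half_sq hs, add_div, rpow_add two_pos,
    ← sqrt_eq_rpow, sqrt_mul zero_le_two]
  field_simp

lemma integrable_abs_rpow_half_add_neg_half_gaussianReal :
    Integrable (fun z ↦ |z| ^ (1 / 2 : ℝ) + |z| ^ (-1 / 2 : ℝ)) (gaussianReal 0 1) :=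
  (integrable_abs_rpow_gaussianReal (by norm_num)).add
    (integrable_abs_rpow_gaussianReal (by norm_num))

lemma integral_abs_rpow_half_add_neg_half_gaussianReal_le :
    ∫ z, (|z| ^ (1 / 2 : ℝ) + |z| ^ (-1 / 2 : ℝ)) ∂gaussianReal 0 1 ≤ (4 / 3 * √2 + 4) / √π := by
  rw [integral_add (integrable_abs_rpow_gaussianReal (by norm_num))
      (integrable_abs_rpow_gaussianReal (by norm_num)),
    integral_abs_rpow_gaussianReal (by norm_num), integral_abs_rpow_gaussianReal (by norm_num),
    show ((1 / 2 : ℝ) + 1) / 2 = 3 / 4 by norm_num, show ((-1 / 2 : ℝ) + 1) / 2 = 1 / 4 by norm_num,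
    ← add_div]
  have hΓ₁ : Gamma (3 / 4) ≤ 4 / 3 := by
    simpa using Gamma_le_inv_of_mem_Ioc (s := 3 / 4) ⟨by norm_num, by norm_num⟩
  have hΓ₂ : Gamma (1 / 4) ≤ 4 := by
    simpa using Gamma_le_inv_of_mem_Ioc (s := 1 / 4) ⟨by norm_num, by norm_num⟩
  have h₁ : (2 : ℝ) ^ (1 / 2 / 2 : ℝ) ≤ √2 := by
    rw [sqrt_eq_rpow]
    exact rpow_le_rpow_of_exponent_le one_le_two (by norm_num)
  have h₂ : (2 : ℝ) ^ (-1 / 2 / 2 : ℝ) ≤ 1 :=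
    rpow_le_one_of_one_le_of_nonpos one_le_two (by norm_num)
  have hm₁ := mul_le_mul h₁ hΓ₁ (Gamma_pos_of_pos (by norm_num)).le (sqrt_nonneg 2)
  have hm₂ := mul_le_mul h₂ hΓ₂ (Gamma_pos_of_pos (by norm_num)).le zero_le_one
  exact div_le_div_of_nonneg_right (by linarith) (sqrt_nonneg π)

lemma three_fifths_add_le_sqrt_eight_div_pi :
    3 / 5 + (4 / 3 * √2 + 4) / √π / 4 ≤ √(8 / π) := by
  have hπ : √π ≤ 2 := sqrt_le_iff.2 ⟨zero_le_two, by linarith [pi_lt_four]⟩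
  have hπ0 : 0 < √π := sqrt_pos.2 pi_pos
  have h2 : (4 / 3 : ℝ) ≤ √2 := le_sqrt_of_sq_le (by norm_num)
  have h8 : √(8 / π) = 2 * √2 / √π := by
    rw [sqrt_div' _ pi_pos.le, show (8 : ℝ) = 2 ^ 2 * 2 by norm_num, sqrt_mul' _ zero_le_two,
      sqrt_sq zero_le_two]
  rw [h8, ← sub_nonneg]
  have h : 2 * √2 / √π - (3 / 5 + (4 / 3 * √2 + 4) / √π / 4)
      = (5 / 3 * √2 - 1 - 3 / 5 * √π) / √π := by
    field_simp
    ring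
  rw [h]
  exact div_nonneg (by linarith) hπ0.le

/-- For `d ≥ e²`, `Z` standard Gaussian and
`X := max{|Z|, |Z|⁻¹}`,
`log log d ≤ E[log log(dX)] ≤ log 2 + log log(d/e) + √(8/π)`. -/
theorem loglog_d_expectation_bound (d : ℝ) (hd : Real.exp 2 ≤ d) :
    Real.log (Real.log d)
        ≤ (∫ z, Real.log (Real.log (d * max |z| |z|⁻¹)) ∂(gaussianReal 0 1)) ∧
    (∫ z, Real.log (Real.log (d * max |z| |z|⁻¹)) ∂(gaussianReal 0 1))
        ≤ Real.log 2 + Real.log (Real.log (d / Real.exp 1)) + Real.sqrt (8 / π) := by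
  have hd1 : 1 < d := (Real.one_lt_exp_iff.2 two_pos).trans_le hd
  have hlog : 0 ≤ log (log d) :=
    log_nonneg ((le_log_iff_exp_le (by linarith)).2 ((exp_le_exp.2 one_le_two).trans hd))
  have hae : ∀ᵐ z ∂gaussianReal 0 1, z ≠ 0 :=
    @Measure.ae_ne _ _ _ (nullSingletonClass_gaussianReal one_ne_zero) 0
  have hm := integrable_abs_rpow_half_add_neg_half_gaussianReal.div_const 4
  have hG : Integrable (fun z ↦ log 2 + log (log (d / exp 1)) +
      (3 / 5 + (|z| ^ (1 / 2 : ℝ) + |z| ^ (-1 / 2 : ℝ)) / 4)) (gaussianReal 0 1) :=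
    (integrable_const _).add ((integrable_const _).add hm)
  have hf : Integrable (fun z ↦ log (log (d * max |z| |z|⁻¹))) (gaussianReal 0 1) := by
    refine hG.mono' (Measurable.aestronglyMeasurable (by fun_prop)) ?_
    filter_upwards [hae] with z hz
    rw [norm_of_nonneg (hlog.trans (log_log_le_log_log_mul_max_abs_inv hd1 hz))]
    exact log_log_mul_max_abs_inv_le hd hz
  constructor
  · calc log (log d) = ∫ _, log (log d) ∂gaussianReal 0 1 := by simp
      _ ≤ _ := integral_mono_ae (integrable_const _) hf
        (hae.mono fun z hz ↦ log_log_le_log_log_mul_max_abs_inv hd1 hz)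
  · calc _ ≤ _ := integral_mono_ae hf hG (hae.mono fun z hz ↦ log_log_mul_max_abs_inv_le hd hz)
      _ = log 2 + log (log (d / exp 1)) + (3 / 5 +
          (∫ z, (|z| ^ (1 / 2 : ℝ) + |z| ^ (-1 / 2 : ℝ)) ∂gaussianReal 0 1) / 4) := by
        rw [integral_add (integrable_const _) (by exact (integrable_const _).add hm),
          integral_add (integrable_const _) hm]
        simp only [integral_const, probReal_univ, one_smul, integral_div]
      _ ≤ _ := by
        grw [integral_abs_rpow_half_add_neg_half_gaussianReal_le,
          three_fifths_add_le_sqrt_eight_div_pi]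
end

section
/- With notation as above (W = Σ a_i Y_i, Σ a_i = 0, γ = τ‖a⃗‖₂, X_{a⃗} = max{e^W, e^{-W}}), one has E[ log log( e X_{a⃗} ) ] ≤ 2 + log(1 + γ). -/
/-!
Put `W = ∑ i, a i * log |Z i|`; the integrand is `log (1 + |W|)`. The tangent line of `log`
at `1 + γ` gives `log (1 + |W|) ≤ log (1 + γ) + (|W| - γ) / (1 + γ)`, and `E|W| ≤ √(E W²) = γ`:
the independent `log |Z i|` share their mean, which `∑ a i = 0` cancels, and have variance `τ²`.
Hence `E log (1 + |W|) ≤ log (1 + γ)`. The only analytic input is that `log |Z|` is square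
integrable for a standard Gaussian `Z`, from `log² |x| ≤ 16 |x| ^ (-1/2) + x²`.
-/

open MeasureTheory ProbabilityTheory Real Set

namespace Real

lemma log_le_log_add_sub_div {x c : ℝ} (hx : 0 < x) (hc : 0 < c) :
    log x ≤ log c + (x - c) / c := by
  have h := log_le_sub_one_of_pos (div_pos hx hc)
  rw [log_div hx.ne' hc.ne', div_sub_one hc.ne'] at h
  linarith

lemma log_log_exp_one_mul_max_exp_exp_neg (w : ℝ) :
    log (log (exp 1 * max (exp w) (exp (-w)))) = log (1 + |w|) := by
  rw [← Monotone.map_max exp_monotone, ← abs_eq_max_neg, ← exp_add, log_exp]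

lemma sq_log_abs_le (x : ℝ) : log |x| ^ 2 ≤ 16 * |x| ^ (-(2 : ℝ)⁻¹) + x ^ 2 := by
  rcases eq_or_ne x 0 with rfl | hx
  · simp
  have hx' : 0 < |x| := abs_pos.mpr hx
  rcases le_or_gt 1 |x| with h1 | h1
  · have hlog : log |x| ≤ |x| := (log_le_sub_one_of_pos hx').trans (by linarith)
    have : log |x| ^ 2 ≤ x ^ 2 := by
      rw [← sq_abs x]; exact pow_le_pow_left₀ (log_nonneg h1) hlog 2
    linarith [rpow_nonneg hx'.le (-(2 : ℝ)⁻¹)]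
  · set u := |x| ^ (-(4 : ℝ)⁻¹)
    have hlog_u : log u = -(4 : ℝ)⁻¹ * log |x| := log_rpow hx' _
    have hu_sq : u ^ 2 = |x| ^ (-(2 : ℝ)⁻¹) := by
      rw [← rpow_natCast, ← rpow_mul hx'.le]; norm_num
    have hu : log u ≤ u :=
      (log_le_sub_one_of_pos (rpow_pos_of_pos hx' _)).trans (sub_le_self _ zero_le_one)
    nlinarith [log_neg hx' h1, sq_nonneg x]

end Real

lemma integrable_abs_rpow_mul_exp_neg_mul_sq {b s : ℝ} (hb : 0 < b) (hs : -1 < s) :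
    Integrable fun x : ℝ => |x| ^ s * exp (-b * x ^ 2) := by
  have hIoi : IntegrableOn (fun x : ℝ => |x| ^ s * exp (-b * x ^ 2)) (Ioi 0) :=
    (integrableOn_rpow_mul_exp_neg_mul_sq hb hs).congr_fun
      (fun x hx => by rw [abs_of_pos hx]) measurableSet_Ioi
  rw [← integrableOn_univ, ← Iio_union_Ici (a := (0 : ℝ)), integrableOn_union,
    integrableOn_Ici_iff_integrableOn_Ioi]
  refine ⟨?_, hIoi⟩
  rw [← (Measure.measurePreserving_neg (volume : Measure ℝ)).integrableOn_comp_preimage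
      (Homeomorph.neg ℝ).measurableEmbedding]
  simpa only [Function.comp_def, neg_sq, neg_preimage, neg_Iio, neg_zero, abs_neg] using hIoi

namespace ProbabilityTheory

lemma gaussianPDFReal_zero_one_le (x : ℝ) : gaussianPDFReal 0 1 x ≤ exp (-2⁻¹ * x ^ 2) := by
  have h2π : 1 ≤ √(2 * π) := one_le_sqrt.mpr (by linarith [pi_gt_three])
  rw [gaussianPDFReal, NNReal.coe_one, mul_one,
    show -(x - 0) ^ 2 / (2 * 1) = -2⁻¹ * x ^ 2 by ring]
  exact mul_le_of_le_one_left (exp_pos _).le (inv_le_one_of_one_le₀ h2π)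

lemma integrable_abs_rpow_gaussianReal {s : ℝ} (hs : -1 < s) :
    Integrable (fun x : ℝ => |x| ^ s) (gaussianReal 0 1) := by
  rw [gaussianReal_of_var_ne_zero 0 one_ne_zero, integrable_withDensity_iff_integrable_smul'
    (measurable_gaussianPDF 0 1) (.of_forall fun _ => gaussianPDF_lt_top)]
  refine (integrable_abs_rpow_mul_exp_neg_mul_sq (b := 2⁻¹) (by norm_num) hs).mono' (by fun_prop)
    (.of_forall fun x => ?_)
  rw [toReal_gaussianPDF, smul_eq_mul, norm_mul, norm_of_nonneg (rpow_nonneg (abs_nonneg x) s),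
    norm_of_nonneg (gaussianPDFReal_nonneg 0 1 x), mul_comm]
  exact mul_le_mul_of_nonneg_left (gaussianPDFReal_zero_one_le x) (rpow_nonneg (abs_nonneg x) s)

lemma memLp_log_abs_gaussianReal : MemLp (fun z : ℝ => log |z|) 2 (gaussianReal 0 1) := by
  rw [memLp_two_iff_integrable_sq measurable_abs.log.aestronglyMeasurable]
  refine (((integrable_abs_rpow_gaussianReal (s := -2⁻¹) (by norm_num)).const_mul 16).add
    (integrable_abs_rpow_gaussianReal (s := 2) (by norm_num))).mono'
    (measurable_abs.log.pow_const 2).aestronglyMeasurable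
    (.of_forall fun x => ?_)
  rw [Pi.add_apply, norm_of_nonneg (sq_nonneg _), rpow_two, sq_abs]
  exact sq_log_abs_le x

variable {Ω : Type*} {mΩ : MeasurableSpace Ω} {μ : Measure Ω}

lemma integral_abs_le_sqrt_integral_sq [IsProbabilityMeasure μ] {X : Ω → ℝ}
    (hX : MemLp X 2 μ) :
    ∫ ω, |X ω| ∂μ ≤ √(∫ ω, X ω ^ 2 ∂μ) := by
  have h := variance_nonneg |X| μ
  rw [variance_eq_sub hX.abs] at h
  simp only [Pi.abs_apply, Pi.pow_apply, sq_abs] at h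
  exact le_sqrt_of_sq_le (by linarith)

lemma integral_log_one_add_abs_le [IsProbabilityMeasure μ] {X : Ω → ℝ} (hX : MemLp X 2 μ)
    {γ : ℝ} (hγ : 0 ≤ γ) (h : ∫ ω, X ω ^ 2 ∂μ ≤ γ ^ 2) :
    ∫ ω, log (1 + |X ω|) ∂μ ≤ log (1 + γ) := by
  have hXabs : Integrable (fun ω => |X ω|) μ := (hX.integrable one_le_two).abs
  have hXabs_le : ∫ ω, |X ω| ∂μ ≤ γ :=
    (integral_abs_le_sqrt_integral_sq hX).trans ((sqrt_le_sqrt h).trans_eq (sqrt_sq hγ))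
  have hint : Integrable (fun ω => (|X ω| - γ) / (1 + γ)) μ :=
    (hXabs.sub (integrable_const _)).div_const _
  calc ∫ ω, log (1 + |X ω|) ∂μ
      ≤ ∫ ω, log (1 + γ) + (|X ω| - γ) / (1 + γ) ∂μ := by
        refine integral_mono_of_nonneg (.of_forall fun ω => log_nonneg (by simp))
          ((integrable_const _).add hint) (.of_forall fun ω => ?_)
        have := log_le_log_add_sub_div (x := 1 + |X ω|) (c := 1 + γ) (by positivity) (by linarith)
        rwa [add_sub_add_left_eq_sub] at this
    _ = log (1 + γ) + (∫ ω, |X ω| ∂μ - γ) / (1 + γ) := by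
        rw [integral_add (integrable_const _) hint, integral_div,
          integral_sub hXabs (integrable_const _)]
        simp
    _ ≤ log (1 + γ) := by
        have : (∫ ω, |X ω| ∂μ - γ) / (1 + γ) ≤ 0 :=
          div_nonpos_of_nonpos_of_nonneg (by linarith) (by positivity)
        linarith

variable {ι : Type*} [Fintype ι] {Y : ι → Ω → ℝ} {a : ι → ℝ}

lemma integral_sum_mul_eq_zero (hY : ∀ i, Integrable (Y i) μ) {m : ℝ}
    (hm : ∀ i, ∫ ω, Y i ω ∂μ = m) (ha : ∑ i, a i = 0) :
    ∫ ω, ∑ i, a i * Y i ω ∂μ = 0 := by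
  rw [integral_finsetSum _ fun i _ => (hY i).const_mul (a i)]
  simp_rw [integral_const_mul, hm, ← Finset.sum_mul, ha, zero_mul]

lemma iIndepFun.variance_sum_mul (hind : iIndepFun Y μ) (hY : ∀ i, MemLp (Y i) 2 μ) :
    Var[fun ω => ∑ i, a i * Y i ω; μ] = ∑ i, a i ^ 2 * Var[Y i; μ] := by
  have hind' : iIndepFun (fun i ω => a i * Y i ω) μ :=
    hind.comp (fun i y => a i * y) fun i => measurable_const_mul (a i)
  have h := IndepFun.variance_sum (s := Finset.univ) (fun i _ => (hY i).const_mul (a i))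
    fun i _ j _ hij => hind'.indepFun hij
  simp_rw [variance_const_mul] at h
  rw [← h]
  congr 1
  ext ω
  simp

lemma iIndepFun.integral_sq_sum_mul_of_sum_eq_zero [IsFiniteMeasure μ] (hind : iIndepFun Y μ)
    (hY : ∀ i, MemLp (Y i) 2 μ) {m v : ℝ} (hm : ∀ i, ∫ ω, Y i ω ∂μ = m)
    (hv : ∀ i, Var[Y i; μ] = v) (ha : ∑ i, a i = 0) :
    ∫ ω, (∑ i, a i * Y i ω) ^ 2 ∂μ = v * ∑ i, a i ^ 2 := by
  have hW : MemLp (fun ω => ∑ i, a i * Y i ω) 2 μ :=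
    memLp_finsetSum _ fun i _ => (hY i).const_mul (a i)
  rw [← variance_of_integral_eq_zero hW.aemeasurable
    (integral_sum_mul_eq_zero (fun i => (hY i).integrable one_le_two) hm ha),
    hind.variance_sum_mul hY, Finset.mul_sum]
  simp_rw [hv, mul_comm]

end ProbabilityTheory

/-- For `W := Σ a_i log|Z_i|` with `Z_i` i.i.d. standard
Gaussians, `Σ a_i = 0`, `τ²` the variance of `log|Z₁|`, `γ := τ‖a⃗‖₂`, and
`X_{a⃗} := max{e^W, e^{-W}}`, one has `E[log log(e X_{a⃗})] ≤ 2 + log(1+γ)`. -/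
theorem loglog_expectation_linear_combination
    {Ω : Type*} [MeasureSpace Ω] [IsProbabilityMeasure (ℙ : Measure Ω)]
    (k : ℕ) (Z : Fin k → Ω → ℝ) (hZmeas : ∀ i, Measurable (Z i))
    (hZind : iIndepFun Z ℙ)
    (hZlaw : ∀ i, (ℙ : Measure Ω).map (Z i) = gaussianReal 0 1)
    (a : Fin k → ℝ) (hsum : ∑ i, a i = 0)
    (τ γ : ℝ) (hτ : 0 ≤ τ)
    (hτ2 : τ ^ 2
      = ProbabilityTheory.variance (fun z : ℝ => Real.log |z|) (gaussianReal 0 1))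
    (hγ : γ = τ * Real.sqrt (∑ i, (a i) ^ 2)) :
    (∫ ω, Real.log (Real.log (Real.exp 1 *
          max (Real.exp (∑ i, a i * Real.log |Z i ω|))
              (Real.exp (-(∑ i, a i * Real.log |Z i ω|))))) ∂ℙ)
      ≤ 2 + Real.log (1 + γ) := by
  have hY : ∀ i,
      IdentDistrib (fun ω => log |Z i ω|) (fun z : ℝ => log |z|) ℙ (gaussianReal 0 1) :=
    fun i => (HasLaw.identDistrib ⟨(hZmeas i).aemeasurable, hZlaw i⟩ HasLaw.id).comp
      measurable_abs.log
  have hYmem : ∀ i, MemLp (fun ω => log |Z i ω|) 2 ℙ :=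
    fun i => (hY i).symm.memLp_snd memLp_log_abs_gaussianReal
  have hYind : iIndepFun (fun i ω => log |Z i ω|) ℙ :=
    hZind.comp (fun _ z => log |z|) fun _ => measurable_abs.log
  have hW2 : ∫ ω, (∑ i, a i * log |Z i ω|) ^ 2 ∂ℙ = γ ^ 2 := by
    rw [hYind.integral_sq_sum_mul_of_sum_eq_zero hYmem
      (fun i => (hY i).integral_eq) (fun i => (hY i).variance_eq.trans hτ2.symm) hsum,
      hγ, mul_pow, sq_sqrt (by positivity)]
  have hγ0 : 0 ≤ γ := hγ ▸ by positivity
  calc _ = ∫ ω, log (1 + |(∑ i, a i * log |Z i ω|)|) ∂ℙ := by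
        simp_rw [log_log_exp_one_mul_max_exp_exp_neg]
    _ ≤ log (1 + γ) := integral_log_one_add_abs_le
        (memLp_finsetSum _ fun i _ => (hYmem i).const_mul (a i)) hγ0 hW2.le
    _ ≤ 2 + log (1 + γ) := by linarith
end
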